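/- arXiv:0909.2277 — 10 statements merged into one kernel-verified Lean document; each statement's English description precedes it below -/
import Mathlib

section
/- For the logistic map L_r(x) = r·x·(1−x) on [0,1] with 1 < r ≤ 4, and any n ≥ 4, there is no point x ∈ [0,1] whose orbit segment (x, L_r(x), …, L_r^{n−1}(x)) consists of distinct values and realizes the pattern (n−2)·1·2·⋯·(n−3)·(n−1)·n; that is, there is no x with L_r(x) < L_r^2(x) < ⋯ < L_r^{n−3}(x) < x < L_r^{n−2}(x) < L_r^{n−1}(x). -/
/-!
A point `b > 0` with `b < L_r b` satisfies `r (1 - b) > 1`, i.e. lies below the fixed point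
`1 - 1/r`; for `r ≥ 0` so does every `x ∈ [0, b]`, whence `x ≤ L_r x`. In the pattern, the
increasing run `L x < ⋯ < L^{n-3} x < x` gives `L x < x`, while `b = L^{n-2} x` satisfies
`x < b < L b`.
-/

/-- The logistic map `L_r(x) = r x (1-x)`. -/
def logistic (r : ℝ) : ℝ → ℝ := fun x => r * x * (1 - x)

theorem le_of_forall_lt_succ_of_le {α : Type*} [Preorder α] {u : ℕ → α} {a b : ℕ} (hab : a ≤ b)
    (hu : ∀ i, a ≤ i → i + 1 ≤ b → u i < u (i + 1)) : u a ≤ u b :=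
  (strictMonoOn_of_lt_succ Set.ordConnected_Icc fun i _ hi hi' =>
      hu i hi.1 (by simpa using hi'.2)).monotoneOn
    ⟨le_rfl, hab⟩ ⟨hab, le_rfl⟩ hab

theorem one_lt_mul_one_sub_of_lt_logistic {r b : ℝ} (hb0 : 0 ≤ b) (hb : b < logistic r b) :
    1 < r * (1 - b) := by
  have hb_pos : 0 < b := hb0.lt_of_ne (by rintro rfl; simp [logistic] at hb)
  unfold logistic at hb
  nlinarith

theorem le_logistic_of_le_of_lt_logistic {r x b : ℝ} (hr : 0 ≤ r) (hx : 0 ≤ x) (hxb : x ≤ b)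
    (hb : b < logistic r b) : x ≤ logistic r x := by
  have hrb := one_lt_mul_one_sub_of_lt_logistic (hx.trans hxb) hb
  have hrx : 1 ≤ r * (1 - x) := hrb.le.trans (by nlinarith)
  calc x = x * 1 := (mul_one x).symm
    _ ≤ x * (r * (1 - x)) := mul_le_mul_of_nonneg_left hrx hx
    _ = logistic r x := by simp only [logistic]; ring

theorem logistic_pattern_forbidden_general (r : ℝ) (hr1 : 1 < r)
    (n : ℕ) (hn : 4 ≤ n) :
    ¬ ∃ x ∈ Set.Icc (0 : ℝ) 1,
      (∀ i : ℕ, 1 ≤ i → i + 1 ≤ n - 3 →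
        (logistic r)^[i] x < (logistic r)^[i + 1] x) ∧
      (logistic r)^[n - 3] x < x ∧
      x < (logistic r)^[n - 2] x ∧
      (logistic r)^[n - 2] x < (logistic r)^[n - 1] x := by
  rintro ⟨x, hx, hrun, hlast, hxb, hbc⟩
  have hfx : logistic r x < x :=
    (le_of_forall_lt_succ_of_le (by omega) hrun).trans_lt hlast
  have hb : (logistic r)^[n - 2] x < logistic r ((logistic r)^[n - 2] x) := by
    rwa [← Function.iterate_succ_apply' (logistic r), show (n - 2).succ = n - 1 by omega]
  exact hfx.not_ge (le_logistic_of_le_of_lt_logistic (zero_lt_one.trans hr1).le hx.1 hxb.le hb)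

/-- For `1 < r ≤ 4` and `n ≥ 4`, no `x ∈ [0,1]` realizes the pattern
`(n-2)·1·2·⋯·(n-3)·(n-1)·n`, i.e. there is no `x` with
`L_r(x) < L_r²(x) < ⋯ < L_r^{n-3}(x) < x < L_r^{n-2}(x) < L_r^{n-1}(x)`. -/
theorem logistic_pattern_forbidden (r : ℝ) (hr1 : 1 < r) (hr4 : r ≤ 4)
    (n : ℕ) (hn : 4 ≤ n) :
    ¬ ∃ x ∈ Set.Icc (0 : ℝ) 1,
      (∀ i : ℕ, 1 ≤ i → i + 1 ≤ n - 3 →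
        (logistic r)^[i] x < (logistic r)^[i + 1] x) ∧
      (logistic r)^[n - 3] x < x ∧
      x < (logistic r)^[n - 2] x ∧
      (logistic r)^[n - 2] x < (logistic r)^[n - 1] x :=
  logistic_pattern_forbidden_general r hr1 n hn
end

section
/- For the logistic map L_r with 1 < r ≤ 4 and any m ≥ 1, there exists x ∈ [0,1] with x < L_r(x) < L_r^2(x) < ⋯ < L_r^{m−1}(x); i.e., the increasing pattern 1 2 ⋯ m is an allowed pattern of L_r. -/
open Set Function

variable {r x : ℝ}

theorem logistic_pos (hr : 0 < r) (hx : x ∈ Ioo 0 1) : 0 < logistic r x :=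
  mul_pos (mul_pos hr hx.1) (sub_pos.2 hx.2)

theorem logistic_le_mul_self (hr : 0 ≤ r) (x : ℝ) : logistic r x ≤ r * x := by
  have : logistic r x = r * x - r * x ^ 2 := by unfold logistic; ring
  nlinarith [mul_nonneg hr (sq_nonneg x)]

theorem lt_logistic_of_mem_Ioo (hr : 0 < r) (hx : x ∈ Ioo 0 (1 - r⁻¹)) : x < logistic r x := by
  have h : 1 < r * (1 - x) := by
    calc (1 : ℝ) = r * (1 - (1 - r⁻¹)) := by field_simp; ring
      _ < r * (1 - x) := by gcongr; exact hx.2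
  calc x = x * 1 := (mul_one x).symm
    _ < x * (r * (1 - x)) := mul_lt_mul_of_pos_left h hx.1
    _ = logistic r x := by unfold logistic; ring

theorem iterate_logistic_le_pow_mul (hr : 0 ≤ r) (x : ℝ) (i : ℕ) :
    (logistic r)^[i] x ≤ r ^ i * x := by
  induction i with
  | zero => simp
  | succ i ih =>
    rw [iterate_succ_apply', pow_succ', mul_assoc]
    exact (logistic_le_mul_self hr _).trans (mul_le_mul_of_nonneg_left ih hr)

theorem iterate_logistic_mem_Ioo (hr : 1 < r) (hx : 0 < x) {n : ℕ} (hn : r ^ n * x < 1 - r⁻¹) :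
    ∀ i ≤ n, (logistic r)^[i] x ∈ Ioo 0 (1 - r⁻¹) := by
  have hp1 : 1 - r⁻¹ < 1 := by linarith [inv_pos.2 (zero_lt_one.trans hr)]
  have hlt : ∀ i ≤ n, (logistic r)^[i] x < 1 - r⁻¹ := fun i hi =>
    calc (logistic r)^[i] x ≤ r ^ i * x := iterate_logistic_le_pow_mul (by linarith) x i
      _ ≤ r ^ n * x := by gcongr; exact hr.le
      _ < 1 - r⁻¹ := hn
  intro i hi
  refine ⟨?_, hlt i hi⟩
  induction i with
  | zero => exact hx
  | succ i ih =>
    rw [iterate_succ_apply']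
    exact logistic_pos (by linarith) ⟨ih (by omega), (hlt i (by omega)).trans hp1⟩

theorem logistic_increasing_allowed_general (r : ℝ) (hr1 : 1 < r)
    (m : ℕ) :
    ∃ x ∈ Set.Icc (0 : ℝ) 1,
      ∀ i : ℕ, i + 1 ≤ m - 1 → (logistic r)^[i] x < (logistic r)^[i + 1] x := by
  have hp : 0 < 1 - r⁻¹ := sub_pos.2 (inv_lt_one_of_one_lt₀ hr1)
  obtain ⟨x, hx, hxn⟩ : ∃ x : ℝ, 0 < x ∧ r ^ m * x < 1 - r⁻¹ := by
    refine ⟨(1 - r⁻¹) / (2 * r ^ m), by positivity, ?_⟩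
    calc r ^ m * ((1 - r⁻¹) / (2 * r ^ m)) = (1 - r⁻¹) / 2 := by field_simp
      _ < 1 - r⁻¹ := half_lt_self hp
  have horbit := iterate_logistic_mem_Ioo hr1 hx hxn
  refine ⟨x, ⟨hx.le, ?_⟩, fun i hi => ?_⟩
  · have := (horbit 0 m.zero_le).2
    simp only [iterate_zero_apply] at this
    linarith [inv_pos.2 (zero_lt_one.trans hr1)]
  · rw [iterate_succ_apply']
    exact lt_logistic_of_mem_Ioo (by linarith) (horbit i (by omega))

/-- For `1 < r ≤ 4` and any `m ≥ 1`, there exists `x ∈ [0,1]` with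
`x < L_r(x) < L_r²(x) < ⋯ < L_r^{m-1}(x)`: the increasing pattern `1 2 ⋯ m`
is allowed for `L_r`. -/
theorem logistic_increasing_allowed (r : ℝ) (hr1 : 1 < r) (hr4 : r ≤ 4)
    (m : ℕ) (hm : 1 ≤ m) :
    ∃ x ∈ Set.Icc (0 : ℝ) 1,
      ∀ i : ℕ, i + 1 ≤ m - 1 → (logistic r)^[i] x < (logistic r)^[i + 1] x :=
  logistic_increasing_allowed_general r hr1 m
end

section
/- For the logistic map L_r with 1 < r ≤ 2 and n ≥ 3, there is no x ∈ [0,1] with L_r(x) < L_r^2(x) < ⋯ < L_r^{n−2}(x) < x < L_r^{n−1}(x); that is, the pattern (n−1)·1·2·⋯·(n−2)·n is a forbidden pattern of L_r. -/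
namespace logistic

variable {r : ℝ}

theorem le_quarter (hr : 0 ≤ r) (x : ℝ) : logistic r x ≤ r / 4 := by
  unfold logistic
  nlinarith [mul_nonneg hr (sq_nonneg (x - 1 / 2))]

theorem monotoneOn_Iic_half (hr : 0 ≤ r) : MonotoneOn (logistic r) (Set.Iic (1 / 2)) := by
  intro y hy x hx hyx
  have hdiff : logistic r x - logistic r y = r * ((x - y) * (1 - x - y)) := by
    unfold logistic; ring
  have : 0 ≤ r * ((x - y) * (1 - x - y)) :=
    mul_nonneg hr (mul_nonneg (sub_nonneg.2 hyx) (by linarith [Set.mem_Iic.1 hx, Set.mem_Iic.1 hy]))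
  linarith

theorem apply_le_of_apply_le_of_lt (hr0 : 0 ≤ r) (hr2 : r ≤ 2) {x y : ℝ}
    (hxy : logistic r x ≤ y) (hyx : y < x) : logistic r y ≤ x := by
  by_contra! hx
  have hx_half : x ≤ 1 / 2 := by linarith [le_quarter hr0 y]
  have : logistic r y ≤ logistic r x :=
    monotoneOn_Iic_half hr0 (hyx.le.trans hx_half : y ≤ 1 / 2) hx_half hyx.le
  linarith

end logistic

theorem logistic_small_r_forbidden_general (r : ℝ) (hr1 : 1 < r) (hr2 : r ≤ 2)
    (n : ℕ) :
    ¬ ∃ x ∈ Set.Icc (0 : ℝ) 1,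
      (∀ i : ℕ, 1 ≤ i → i + 1 ≤ n - 2 →
        (logistic r)^[i] x < (logistic r)^[i + 1] x) ∧
      (logistic r)^[n - 2] x < x ∧
      x < (logistic r)^[n - 1] x := by
  rintro ⟨x, -, hchain, hlt, hgt⟩
  have hn : 1 ≤ n - 2 := by
    by_contra! h
    rw [Nat.lt_one_iff.1 h, Function.iterate_zero_apply] at hlt
    exact hlt.false
  have hmono : MonotoneOn (fun i => (logistic r)^[i] x) (Set.Icc 1 (n - 2)) :=
    monotoneOn_of_le_add_one Set.ordConnected_Icc fun i _ hi hi1 => (hchain i hi.1 hi1.2).le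
  have hfirst : logistic r x ≤ (logistic r)^[n - 2] x :=
    hmono ⟨le_rfl, hn⟩ ⟨hn, le_rfl⟩ hn
  rw [show n - 1 = n - 2 + 1 by omega, Function.iterate_succ_apply'] at hgt
  exact hgt.not_ge (logistic.apply_le_of_apply_le_of_lt (by linarith) hr2 hfirst hlt)

/-- For `1 < r ≤ 2` and `n ≥ 3`, there is no `x ∈ [0,1]` with
`L_r(x) < L_r²(x) < ⋯ < L_r^{n-2}(x) < x < L_r^{n-1}(x)`:
the pattern `(n-1)·1·2·⋯·(n-2)·n` is forbidden for `L_r`. -/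
theorem logistic_small_r_forbidden (r : ℝ) (hr1 : 1 < r) (hr2 : r ≤ 2)
    (n : ℕ) (hn : 3 ≤ n) :
    ¬ ∃ x ∈ Set.Icc (0 : ℝ) 1,
      (∀ i : ℕ, 1 ≤ i → i + 1 ≤ n - 2 →
        (logistic r)^[i] x < (logistic r)^[i + 1] x) ∧
      (logistic r)^[n - 2] x < x ∧
      x < (logistic r)^[n - 1] x :=
  logistic_small_r_forbidden_general r hr1 hr2 n
end

section
/- For each 1 < r < 4 there exists n₀ such that for all n ≥ n₀, there is no x ∈ [0,1] with L_r(x) < L_r^2(x) < ⋯ < L_r^{n−2}(x) < x < L_r^{n−1}(x); i.e., the pattern (n−1)·1·2·⋯·(n−2)·n is forbidden for L_r for all sufficiently large n. -/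
/-!
Write `z i = L^[i] x`, `y = z (n - 2)` and `p = (r - 1) / r` for the nonzero fixed point.
From `y < x < L y` we get `y < L y`, hence `y < p`; from `L x ≤ y < x` we get `p ≤ x`.
Since `L z - p = r (z - 1/r) (p - z)`, a point `z < p` is mapped above `p` only if `1/r < z`.
Thus `1/r < y < p`, which forces `r > 2`, while the increasing chain `z 1 < ⋯ < z (n - 3)`
stays in `[0, 1/r]`, where `L z ≥ (r - 1) z`. So `(r - 1)^(n - 4) z 1 ≤ 1/r`, and
`z 1 = L x ≥ L (r/4) > 0` because `1/2 < p ≤ x ≤ L y ≤ r/4`; as `r - 1 > 1`, `n` is bounded.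
-/

open Set

section LogisticMap

variable {r x : ℝ}

lemma logistic_le_quarter (hr : 0 ≤ r) (x : ℝ) : logistic r x ≤ r / 4 := by
  unfold logistic
  nlinarith [mul_nonneg hr (sq_nonneg (2 * x - 1))]

lemma mapsTo_logistic (hr0 : 0 ≤ r) (hr4 : r ≤ 4) :
    MapsTo (logistic r) (Icc 0 1) (Icc 0 1) := fun x ⟨hx0, hx1⟩ =>
  ⟨mul_nonneg (mul_nonneg hr0 hx0) (by linarith), by linarith [logistic_le_quarter hr0 x]⟩

lemma lt_logistic_iff (hr : 0 < r) (hx : 0 ≤ x) :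
    x < logistic r x ↔ 0 < x ∧ x < (r - 1) / r := by
  have key : logistic r x - x = x * (r - 1 - r * x) := by
    unfold logistic; ring
  rw [← sub_pos, key, lt_div_iff₀ hr]
  constructor
  · intro h
    have hx0 : 0 < x := lt_of_le_of_ne hx (by rintro rfl; simp at h)
    exact ⟨hx0, by linarith [pos_of_mul_pos_right h hx]⟩
  · rintro ⟨hx0, hxp⟩
    exact mul_pos hx0 (by linarith)

lemma fixedPoint_lt_logistic_iff (hr : 0 < r) (hx : x < (r - 1) / r) :
    (r - 1) / r < logistic r x ↔ 1 / r < x := by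
  have key : logistic r x - (r - 1) / r = r * (x - 1 / r) * ((r - 1) / r - x) := by
    unfold logistic; field_simp; ring
  rw [← sub_pos, key, ← sub_pos (b := 1 / r)]
  have hpx := sub_pos.2 hx
  constructor
  · intro h; exact pos_of_mul_pos_right (pos_of_mul_pos_left h hpx.le) hr.le
  · intro h; positivity

lemma mul_le_logistic (hr : 0 < r) (hx0 : 0 ≤ x) (hx : x ≤ 1 / r) :
    (r - 1) * x ≤ logistic r x := by
  rw [le_div_iff₀ hr] at hx
  unfold logistic
  nlinarith

lemma logistic_antitoneOn (hr : 0 ≤ r) : AntitoneOn (logistic r) (Ici (1 / 2)) := by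
  intro x hx y hy hxy
  simp only [mem_Ici] at hx hy
  unfold logistic
  nlinarith [mul_nonneg hr (mul_nonneg (sub_nonneg.2 hxy) (by linarith : (0 : ℝ) ≤ x + y - 1))]

end LogisticMap

theorem logistic_pattern_bound {r x : ℝ} {k : ℕ} (hr1 : 1 < r) (hr4 : r ≤ 4)
    (hx : x ∈ Icc 0 1)
    (hchain : ∀ i, 1 ≤ i → i + 1 ≤ k + 2 → (logistic r)^[i] x < (logistic r)^[i + 1] x)
    (hlast : (logistic r)^[k + 2] x < x) (hfirst : x < (logistic r)^[k + 3] x) :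
    2 < r ∧ (r - 1) ^ k * logistic r (r / 4) ≤ 1 / r := by
  have hr0 : 0 < r := by linarith
  set L := logistic r
  set z : ℕ → ℝ := fun i => L^[i] x
  have hz0 (i : ℕ) : 0 ≤ z i := ((mapsTo_logistic hr0.le hr4).iterate i hx).1
  have hz_succ (i : ℕ) : z (i + 1) = L (z i) := Function.iterate_succ_apply' L i x
  have hz_mono : MonotoneOn z (Icc 1 (k + 2)) :=
    monotoneOn_of_le_add_one ordConnected_Icc fun i _ hi hi' => (hchain i hi.1 hi'.2).le
  have hz_le_y {i : ℕ} (hi : i ∈ Icc 1 (k + 2)) : z i ≤ z (k + 2) :=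
    hz_mono hi ⟨by omega, le_rfl⟩ hi.2
  have hxLy : x < L (z (k + 2)) := hz_succ (k + 2) ▸ hfirst
  obtain ⟨-, hyp⟩ := (lt_logistic_iff hr0 (hz0 _)).1 (hlast.trans hxLy)
  have hpx : (r - 1) / r ≤ x := by
    have hLx : L x < x := (hz_le_y ⟨le_rfl, by omega⟩).trans_lt hlast
    by_contra! h
    exact hLx.not_gt ((lt_logistic_iff hr0 hx.1).2 ⟨(hz0 _).trans_lt hlast, h⟩)
  have hinv_y : 1 / r < z (k + 2) :=
    (fixedPoint_lt_logistic_iff hr0 hyp).1 (hpx.trans_lt hxLy)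
  have hr2 : 2 < r := by
    have := hinv_y.trans hyp
    rw [div_lt_div_iff_of_pos_right hr0] at this
    linarith
  refine ⟨hr2, ?_⟩
  have hz_le_inv {i : ℕ} (hi : i ∈ Icc 1 (k + 1)) : z i ≤ 1 / r := by
    obtain ⟨hi1, hi2⟩ := hi
    have hzp (j : ℕ) (hj : j ∈ Icc 1 (k + 2)) : z j < (r - 1) / r := (hz_le_y hj).trans_lt hyp
    by_contra! h
    have := (fixedPoint_lt_logistic_iff hr0 (hzp i ⟨hi1, by omega⟩)).2 h
    exact (hzp (i + 1) ⟨by omega, by omega⟩).not_gt (hz_succ i ▸ this)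
  have hgeom : (r - 1) ^ k * z 1 ≤ z (k + 1) :=
    geom_le (u := fun j => z (j + 1)) (by linarith) k fun j hj =>
      hz_succ (j + 1) ▸ mul_le_logistic hr0 (hz0 _) (hz_le_inv ⟨by omega, by omega⟩)
  have hz1 : L (r / 4) ≤ z 1 := by
    have hx_le : x ≤ r / 4 := hxLy.le.trans (logistic_le_quarter hr0.le _)
    have hhalf : 1 / 2 ≤ x := le_trans (by rw [le_div_iff₀ hr0]; linarith) hpx
    exact logistic_antitoneOn hr0.le hhalf (hhalf.trans hx_le) hx_le
  calc (r - 1) ^ k * L (r / 4) ≤ (r - 1) ^ k * z 1 := by gcongr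
    _ ≤ z (k + 1) := hgeom
    _ ≤ 1 / r := hz_le_inv ⟨by omega, le_rfl⟩

/-- For each `1 < r < 4` there exists `n₀` such that for every `n ≥ n₀`, the pattern
`(n-1)·1·2·⋯·(n-2)·n` is forbidden for `L_r`: no `x ∈ [0,1]` satisfies
`L_r(x) < L_r²(x) < ⋯ < L_r^{n-2}(x) < x < L_r^{n-1}(x)`. -/
theorem logistic_eventually_forbidden (r : ℝ) (hr1 : 1 < r) (hr4 : r < 4) :
    ∃ n₀ : ℕ, ∀ n : ℕ, n₀ ≤ n →
      ¬ ∃ x ∈ Set.Icc (0 : ℝ) 1,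
        (∀ i : ℕ, 1 ≤ i → i + 1 ≤ n - 2 →
          (logistic r)^[i] x < (logistic r)^[i + 1] x) ∧
        (logistic r)^[n - 2] x < x ∧
        x < (logistic r)^[n - 1] x := by
  have hc : 0 < logistic r (r / 4) := by
    unfold logistic; apply mul_pos <;> nlinarith
  obtain ⟨k, hk⟩ : ∃ k : ℕ, 2 < r → 1 / r < (r - 1) ^ k * logistic r (r / 4) := by
    by_cases hr2 : 2 < r
    · obtain ⟨k, hk⟩ :=
        pow_unbounded_of_one_lt (1 / r / logistic r (r / 4)) (by linarith : 1 < r - 1)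
      exact ⟨k, fun _ => (div_lt_iff₀ hc).1 hk⟩
    · exact ⟨0, fun h => absurd h hr2⟩
  refine ⟨k + 4, fun n hn ⟨x, hx, hchain, hlast, hfirst⟩ => ?_⟩
  obtain ⟨m, rfl⟩ : ∃ m, n = m + 4 := ⟨n - 4, by omega⟩
  rw [show m + 4 - 2 = m + 2 by omega] at hchain hlast
  rw [show m + 4 - 1 = m + 3 by omega] at hfirst
  obtain ⟨hr2, hbound⟩ := logistic_pattern_bound hr1 hr4.le hx hchain hlast hfirst
  have hpow : (r - 1) ^ k ≤ (r - 1) ^ m := pow_le_pow_right₀ (by linarith) (by omega)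
  have := mul_le_mul_of_nonneg_right hpow hc.le
  linarith [hk hr2]
end

section
/- Let Λ : [0,1] → [0,1] be the tent map (Λ(x) = 2x for x ≤ 1/2, Λ(x) = 2 − 2x for x ≥ 1/2). For every m ≥ 3, the point x = 1 − (1 + 2^{−m})/(2^{m−1} + 1) satisfies Λ(x) < Λ^2(x) < ⋯ < Λ^{m−2}(x) < x < Λ^{m−1}(x); hence the pattern (m−1)·1·2·⋯·(m−2)·m is an allowed pattern of the tent map. -/
/-!
The point is `x = 1 - s` with `s = (1 + (2b)⁻¹)/(b + 1)` and `b = 2^(m-1)`. Since the tent map is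
symmetric about `1/2`, the orbit of `1 - s` agrees with that of `s` from the first step on, and
on `[0, 1/2]` the tent map is doubling, so `Λ^k(x) = 2^k s` as long as `2^k s ≤ 1`; this holds up
to `k = m - 1` because `b s = (b + 1/2)/(b + 1) < 1`. The iterates are therefore increasing, and
the two remaining inequalities `2^(m-2) s < 1 - s < 2^(m-1) s` are elementary estimates in `b`.
-/

/-- The tent map `Λ(x) = 2x` for `x < 1/2`, `Λ(x) = 2 - 2x` for `x ≥ 1/2`. -/
noncomputable def tent : ℝ → ℝ := fun x => if x < 1 / 2 then 2 * x else 2 - 2 * x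

lemma tent_of_le_half {y : ℝ} (hy : y ≤ 1 / 2) : tent y = 2 * y := by
  unfold tent
  split_ifs with h
  · rfl
  · linarith [le_antisymm hy (not_lt.mp h)]

lemma tent_one_sub (y : ℝ) : tent (1 - y) = tent y := by
  unfold tent
  split_ifs <;> linarith

lemma tent_iterate_succ_one_sub (k : ℕ) (y : ℝ) : tent^[k + 1] (1 - y) = tent^[k + 1] y := by
  rw [Function.iterate_succ_apply, Function.iterate_succ_apply, tent_one_sub]

lemma tent_iterate_eq_two_pow_mul {y : ℝ} {k : ℕ} (hk : 2 ^ k * y ≤ 1) :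
    tent^[k] y = 2 ^ k * y := by
  induction k with
  | zero => simp
  | succ k ih =>
    have hk' : 2 ^ k * y ≤ 1 / 2 := by rw [pow_succ] at hk; linarith
    rw [Function.iterate_succ_apply', ih (by linarith), tent_of_le_half hk', pow_succ]
    ring

noncomputable def patternGap (b : ℝ) : ℝ := (1 + (2 * b)⁻¹) / (b + 1)

section PatternGap

variable {b : ℝ}

lemma patternGap_pos (hb : 0 < b) : 0 < patternGap b := by
  unfold patternGap
  positivity

lemma mul_patternGap_le_one (hb : 0 < b) : b * patternGap b ≤ 1 := by
  unfold patternGap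
  rw [mul_div_assoc', div_le_one (by positivity)]
  field_simp
  linarith

lemma one_sub_patternGap_lt_mul (hb : 0 < b) : 1 - patternGap b < b * patternGap b := by
  have key : (b + 1) * patternGap b = 1 + (2 * b)⁻¹ := by
    unfold patternGap
    field_simp
  have : 0 < (2 * b)⁻¹ := by positivity
  linarith

lemma half_mul_patternGap_lt_one_sub (hb : 2 ≤ b) : b / 2 * patternGap b < 1 - patternGap b := by
  have key : (b / 2 + 1) * patternGap b < 1 := by
    unfold patternGap
    rw [mul_div_assoc', div_lt_one (by linarith)]
    field_simp
    nlinarith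
  linarith

end PatternGap

/-- For `m ≥ 3`, the point `x = 1 - (1 + 2^{-m})/(2^{m-1} + 1)` satisfies
`Λ(x) < Λ²(x) < ⋯ < Λ^{m-2}(x) < x < Λ^{m-1}(x)`, so the pattern
`(m-1)·1·2·⋯·(m-2)·m` is allowed for the tent map. -/
theorem tent_pattern_allowed (m : ℕ) (hm : 3 ≤ m) :
    let x : ℝ := 1 - (1 + ((2 : ℝ) ^ m)⁻¹) / ((2 : ℝ) ^ (m - 1) + 1)
    (∀ i : ℕ, 1 ≤ i → i + 1 ≤ m - 2 → tent^[i] x < tent^[i + 1] x) ∧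
    tent^[m - 2] x < x ∧
    x < tent^[m - 1] x := by
  intro x
  set b : ℝ := 2 ^ (m - 1) with hb_def
  have hb : 2 ≤ b := le_self_pow₀ one_le_two (by omega)
  have hx : x = 1 - patternGap b := by
    simp only [x, patternGap, b, ← pow_succ', Nat.sub_add_cancel (by omega : 1 ≤ m)]
  have hs : 0 < patternGap b := patternGap_pos (by linarith)
  have orbit : ∀ k, 1 ≤ k → k ≤ m - 1 → tent^[k] x = 2 ^ k * patternGap b := by
    intro k hk1 hk
    obtain ⟨j, rfl⟩ : ∃ j, k = j + 1 := ⟨k - 1, by omega⟩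
    rw [hx, tent_iterate_succ_one_sub, tent_iterate_eq_two_pow_mul]
    calc 2 ^ (j + 1) * patternGap b ≤ 2 ^ (m - 1) * patternGap b := by gcongr; norm_num
      _ ≤ 1 := mul_patternGap_le_one (by linarith)
  have hb_half : (2 : ℝ) ^ (m - 2) = b / 2 := by
    rw [hb_def, show m - 1 = m - 2 + 1 by omega, pow_succ, mul_div_cancel_right₀ _ two_ne_zero]
  refine ⟨fun i hi1 hi2 => ?_, ?_, ?_⟩
  · rw [orbit i hi1 (by omega), orbit (i + 1) (by omega) (by omega)]
    gcongr
    · norm_num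
    · omega
  · rw [orbit (m - 2) (by omega) (by omega), hb_half, hx]
    exact half_mul_patternGap_lt_one_sub hb
  · rw [orbit (m - 1) (by omega) le_rfl, hx]
    exact one_sub_patternGap_lt_mul (by linarith)
end

section
/- For the tent map Λ and m ≥ 3, the set { x ∈ [0,1] : x < Λ(x) < Λ^2(x) < ⋯ < Λ^{m−2}(x) } equals the open interval (0, 1/(3·2^{m−4})). -/
theorem Function.iterate_lt_iterate_succ_succ_iff {α : Type*} [Preorder α] (f : α → α)
    (n : ℕ) (x : α) :
    (∀ i, i + 1 ≤ n + 1 → f^[i] x < f^[i + 1] x) ↔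
      x < f x ∧ ∀ i, i + 1 ≤ n → f^[i] (f x) < f^[i + 1] (f x) := by
  refine ⟨fun h => ⟨h 0 (by omega), fun i hi => ?_⟩, fun ⟨h0, h⟩ i hi => ?_⟩
  · simpa only [Function.iterate_succ_apply] using h (i + 1) (by omega)
  · rcases i with _ | i
    · exact h0
    · simpa only [Function.iterate_succ_apply] using h i (by omega)

lemma tent_of_lt_half {x : ℝ} (h : x < 1 / 2) : tent x = 2 * x := if_pos h

lemma tent_of_half_le {x : ℝ} (h : 1 / 2 ≤ x) : tent x = 2 - 2 * x := if_neg (not_lt.2 h)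

lemma lt_tent_iff {x : ℝ} : x < tent x ↔ 0 < x ∧ x < 2 / 3 := by
  rcases lt_or_ge x (1 / 2) with h | h
  · rw [tent_of_lt_half h]
    exact ⟨fun hlt => ⟨by linarith, by linarith⟩, fun hx => by linarith [hx.1]⟩
  · rw [tent_of_half_le h]
    exact ⟨fun hlt => ⟨by linarith, by linarith⟩, fun hx => by linarith [hx.2]⟩

theorem tent_iterate_lt_iterate_succ_iff (n : ℕ) (x : ℝ) :
    (∀ i, i + 1 ≤ n + 1 → tent^[i] x < tent^[i + 1] x) ↔ 0 < x ∧ 2 ^ n * x < 2 / 3 := by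
  induction n generalizing x with
  | zero => simpa using lt_tent_iff
  | succ n ih =>
    rw [Function.iterate_lt_iterate_succ_succ_iff]
    constructor
    · rintro ⟨hstep, hrest⟩
      obtain ⟨hpos, h23⟩ := lt_tent_iff.1 hstep
      obtain ⟨-, hlast⟩ := (ih (tent x)).1 hrest
      have hone : (1 : ℝ) ≤ 2 ^ n := one_le_pow₀ (by norm_num)
      have hhalf : x < 1 / 2 := by
        by_contra! h
        rw [tent_of_half_le h] at hlast
        nlinarith
      rw [tent_of_lt_half hhalf] at hlast
      exact ⟨hpos, by rw [pow_succ]; linarith⟩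
    · rintro ⟨hpos, hlast⟩
      have hone : (1 : ℝ) ≤ 2 ^ n := one_le_pow₀ (by norm_num)
      have hthird : x < 1 / 3 := by rw [pow_succ] at hlast; nlinarith
      have htent : tent x = 2 * x := tent_of_lt_half (by linarith)
      refine ⟨lt_tent_iff.2 ⟨hpos, by linarith⟩, (ih (tent x)).2 ?_⟩
      rw [htent]
      exact ⟨by linarith, by rw [pow_succ] at hlast; linarith⟩

/-- For `m ≥ 3`, the set `{x ∈ [0,1] : x < Λ(x) < Λ²(x) < ⋯ < Λ^{m-2}(x)}` equals the
open interval `(0, 1/(3·2^{m-4}))`, where `1/(3·2^{m-4})` means `4/(3·2^{m-2})`. -/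
theorem tent_increasing_set (m : ℕ) (hm : 3 ≤ m) :
    {x : ℝ | x ∈ Set.Icc (0 : ℝ) 1 ∧
      ∀ i : ℕ, i + 1 ≤ m - 2 → tent^[i] x < tent^[i + 1] x} =
    Set.Ioo (0 : ℝ) (4 / (3 * 2 ^ (m - 2))) := by
  obtain ⟨n, hn⟩ : ∃ n, m - 2 = n + 1 := ⟨m - 3, by omega⟩
  have hbound : (4 / (3 * 2 ^ (n + 1)) : ℝ) = 2 / 3 / 2 ^ n := by
    rw [pow_succ]; field_simp; norm_num
  have hone : (1 : ℝ) ≤ 2 ^ n := one_le_pow₀ (by norm_num)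
  ext x
  simp only [Set.mem_ofPred_eq, Set.mem_Icc, Set.mem_Ioo, hn, hbound,
    lt_div_iff₀ (by positivity : (0 : ℝ) < 2 ^ n), mul_comm x]
  constructor
  · rintro ⟨⟨hx0, -⟩, hinc⟩
    exact (tent_iterate_lt_iterate_succ_iff n x).1 hinc
  · rintro ⟨hpos, hlast⟩
    exact ⟨⟨hpos.le, by nlinarith⟩, (tent_iterate_lt_iterate_succ_iff n x).2 ⟨hpos, hlast⟩⟩
end

section
/- Let f : [0,1] → [0,1] be continuous with f(0) = 0, f(x) = f(1−x) for all x, exactly one fixed point in the open interval (0,1), and f(x₀) > x₀ for some x₀. Then for every n ≥ 4, the pattern (n−2)·1·2·⋯·(n−3)·(n−1)·n is forbidden: there is no x ∈ [0,1] with f(x) < f^2(x) < ⋯ < f^{n−3}(x) < x < f^{n−2}(x) < f^{n−1}(x). -/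
/-! By the intermediate value theorem, `f - id` has constant sign on each side of the unique
interior fixed point `t`: it is positive on `(0,t)`, which must contain `x₀`, and nonpositive on
`[t,1]`, since `f 1 = f 0 = 0`. Since `f^{n-2}(x) < f^{n-1}(x)`, the point `f^{n-2}(x)` lies left of
`t`, hence so does `x < f^{n-2}(x)`, and `0 ≤ f^{n-3}(x) < x`. So `x < f(x)`, while the increasing
chain gives `f(x) ≤ f^{n-3}(x) < x`. -/

open Set

theorem IsPreconnected.lt_of_lt_of_forall_ne {X α : Type*} [TopologicalSpace X] [LinearOrder α]
    [TopologicalSpace α] [OrderClosedTopology α] {s : Set X} (hs : IsPreconnected s)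
    {f g : X → α} (hf : ContinuousOn f s) (hg : ContinuousOn g s) (hne : ∀ z ∈ s, f z ≠ g z)
    {a b : X} (ha : a ∈ s) (hb : b ∈ s) (hab : f a < g a) : f b < g b := by
  by_contra! hba
  obtain ⟨c, hc, hfgc⟩ := hs.intermediate_value₂ ha hb hf hg hab.le hba
  exact hne c hc hfgc

section UnitIntervalMap

variable {f : ℝ → ℝ} (hcont : ContinuousOn f (Icc 0 1)) {t : ℝ} (ht : t ∈ Ioo 0 1)
  (huniq : ∀ y ∈ Ioo (0 : ℝ) 1, f y = y → y = t)
include hcont ht huniq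

theorem le_self_of_unique_fixedPoint (h1 : f 1 = 0) (hft : f t = t) :
    ∀ y ∈ Icc t 1, f y ≤ y := by
  intro y hy
  rcases hy.1.eq_or_lt with rfl | hty
  · exact hft.le
  have hsub : Ioc t 1 ⊆ Icc 0 1 := Ioc_subset_Icc_self.trans (Icc_subset_Icc_left ht.1.le)
  have hne : ∀ z ∈ Ioc t 1, f z ≠ z := by
    rintro z ⟨htz, hz1⟩ hfz
    rcases hz1.eq_or_lt with rfl | hz1
    · linarith
    · exact htz.ne' (huniq z ⟨ht.1.trans htz, hz1⟩ hfz)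
  refine (isPreconnected_Ioc.lt_of_lt_of_forall_ne (hcont.mono hsub) continuousOn_id hne
    (right_mem_Ioc.2 ht.2) ⟨hty, hy.2⟩ ?_).le
  simp [h1]

theorem lt_self_of_unique_fixedPoint (h1 : f 1 = 0) (hft : f t = t) (h0 : f 0 = 0)
    {x₀ : ℝ} (hx₀ : x₀ ∈ Icc 0 1) (hfx₀ : x₀ < f x₀) : ∀ y ∈ Ioo 0 t, y < f y := by
  have hx₀t : x₀ ∈ Ioo 0 t := by
    refine ⟨hx₀.1.lt_of_ne ?_, lt_of_not_ge fun htx₀ => ?_⟩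
    · rintro rfl
      exact hfx₀.ne' h0
    · exact (le_self_of_unique_fixedPoint hcont ht huniq h1 hft x₀ ⟨htx₀, hx₀.2⟩).not_gt hfx₀
  have hsub : Ioo 0 t ⊆ Icc 0 1 := Ioo_subset_Icc_self.trans (Icc_subset_Icc_right ht.2.le)
  have hne : ∀ z ∈ Ioo 0 t, z ≠ f z := fun z hz hfz =>
    hz.2.ne (huniq z ⟨hz.1, hz.2.trans ht.2⟩ hfz.symm)
  exact fun y hy =>
    isPreconnected_Ioo.lt_of_lt_of_forall_ne continuousOn_id (hcont.mono hsub) hne hx₀t hy hfx₀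

end UnitIntervalMap

theorem iterate_one_le_iterate_of_chain {f : ℝ → ℝ} {x : ℝ} {m : ℕ} (hm : 1 ≤ m)
    (hchain : ∀ i : ℕ, 1 ≤ i → i + 1 ≤ m → f^[i] x < f^[i + 1] x) : f x ≤ f^[m] x := by
  have hmono : MonotoneOn (fun i => f^[i] x) (Icc 1 m) :=
    monotoneOn_of_le_succ ordConnected_Icc fun i _ hi hi' => by
      rw [Order.succ_eq_add_one] at hi' ⊢
      exact (hchain i hi.1 hi'.2).le
  exact hmono ⟨le_rfl, hm⟩ ⟨hm, le_rfl⟩ hm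

theorem symmetric_map_forbidden_general (f : ℝ → ℝ)
    (hmap : ∀ x ∈ Set.Icc (0 : ℝ) 1, f x ∈ Set.Icc (0 : ℝ) 1)
    (hcont : ContinuousOn f (Set.Icc (0 : ℝ) 1))
    (h0 : f 0 = 0)
    (hsymm : ∀ x ∈ Set.Icc (0 : ℝ) 1, f x = f (1 - x))
    (hfix : ∃! t, t ∈ Set.Ioo (0 : ℝ) 1 ∧ f t = t)
    (habove : ∃ x₀ ∈ Set.Icc (0 : ℝ) 1, x₀ < f x₀)
    (n : ℕ) :
    ¬ ∃ x ∈ Set.Icc (0 : ℝ) 1,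
      (∀ i : ℕ, 1 ≤ i → i + 1 ≤ n - 3 → f^[i] x < f^[i + 1] x) ∧
      f^[n - 3] x < x ∧
      x < f^[n - 2] x ∧
      f^[n - 2] x < f^[n - 1] x := by
  rintro ⟨x, hx, hchain, hlast, hjump, hrise⟩
  obtain ⟨t, ⟨ht, hft⟩, huniq⟩ := hfix
  obtain ⟨x₀, hx₀, hfx₀⟩ := habove
  have h1 : f 1 = 0 := by simpa [h0] using hsymm 1 (by simp)
  have hn : 1 ≤ n - 3 := Nat.one_le_iff_ne_zero.2 fun h => by simp [h] at hlast
  have hiter : ∀ k, f^[k] x ∈ Icc 0 1 := fun k => MapsTo.iterate hmap k hx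
  have hleft : f^[n - 2] x < t := by
    by_contra! htle
    have hsucc : f^[n - 1] x = f (f^[n - 2] x) := by
      rw [← Function.iterate_succ_apply' f]; congr 1; omega
    have := le_self_of_unique_fixedPoint hcont ht (fun y hy hfy => huniq y ⟨hy, hfy⟩) h1 hft
      _ ⟨htle, (hiter _).2⟩
    linarith
  have hxf : x < f x := lt_self_of_unique_fixedPoint hcont ht (fun y hy hfy => huniq y ⟨hy, hfy⟩)
    h1 hft h0 hx₀ hfx₀ x ⟨(hiter _).1.trans_lt hlast, hjump.trans hleft⟩
  linarith [iterate_one_le_iterate_of_chain hn hchain]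

/-- Let `f : [0,1] → [0,1]` be continuous with `f(0) = 0`, `f(x) = f(1-x)` for all `x`,
exactly one fixed point in `(0,1)`, and `f(x₀) > x₀` for some `x₀`. Then for every
`n ≥ 4`, there is no `x ∈ [0,1]` with
`f(x) < f²(x) < ⋯ < f^{n-3}(x) < x < f^{n-2}(x) < f^{n-1}(x)`:
the pattern `(n-2)·1·2·⋯·(n-3)·(n-1)·n` is forbidden. -/
theorem symmetric_map_forbidden (f : ℝ → ℝ)
    (hmap : ∀ x ∈ Set.Icc (0 : ℝ) 1, f x ∈ Set.Icc (0 : ℝ) 1)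
    (hcont : ContinuousOn f (Set.Icc (0 : ℝ) 1))
    (h0 : f 0 = 0)
    (hsymm : ∀ x ∈ Set.Icc (0 : ℝ) 1, f x = f (1 - x))
    (hfix : ∃! t, t ∈ Set.Ioo (0 : ℝ) 1 ∧ f t = t)
    (habove : ∃ x₀ ∈ Set.Icc (0 : ℝ) 1, x₀ < f x₀)
    (n : ℕ) (hn : 4 ≤ n) :
    ¬ ∃ x ∈ Set.Icc (0 : ℝ) 1,
      (∀ i : ℕ, 1 ≤ i → i + 1 ≤ n - 3 → f^[i] x < f^[i + 1] x) ∧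
      f^[n - 3] x < x ∧
      x < f^[n - 2] x ∧
      f^[n - 2] x < f^[n - 1] x :=
  symmetric_map_forbidden_general f hmap hcont h0 hsymm hfix habove n
end

section
/- Let f : [0,1] → [0,1] be continuous satisfying f(0) = 0, f(x) = f(1−x) for all x, exactly one fixed point in (0,1), and f(x₀) > x₀ for some x₀. Then for every m ≥ 3 there exists x ∈ [0,1] with f(x) < f^2(x) < ⋯ < f^{m−1}(x) < x; i.e., the pattern m·1·2·⋯·(m−1) is allowed for f. -/
/-!
By symmetry `f 1 = f 0 = 0`, so `f` lies below the diagonal on `(t, 1]`, where `t` is the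
fixed point; the point `x₀` must therefore lie in `(0, t)`, and with no fixed point there,
`f` lies above the diagonal on all of `(0, t)`. As `0` is a fixed point and `f` is continuous
there, a small enough `y > 0` has `y < f y < ⋯ < f^{m-2} y` all in `(0, min t (1/2))`.
Pick `z ∈ (0, y)` with `f z = y`; by symmetry `x = 1 - z` also satisfies `f x = y`, and
`x > 1/2` exceeds all these iterates.
-/

open Set Filter Topology

theorem IsPreconnected.lt_apply_of_forall_ne {X β : Type*} [TopologicalSpace X] [LinearOrder β]
    [TopologicalSpace β] [OrderClosedTopology β] {s : Set X} (hs : IsPreconnected s)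
    {g : X → β} (hg : ContinuousOn g s) {c : β} (hne : ∀ x ∈ s, g x ≠ c) {p x : X}
    (hp : p ∈ s) (hx : x ∈ s) (hcp : c < g p) : c < g x := by
  by_contra! hxc
  obtain ⟨y, hy, hyc⟩ := hs.intermediate_value hx hp hg ⟨hxc, hcp.le⟩
  exact hne y hy hyc

theorem lt_apply_of_mem_Ioo_of_unique_fixedPt {f : ℝ → ℝ} {a b t x₀ : ℝ}
    (hcont : ContinuousOn f (Icc a b)) (ha : f a ≤ a) (hb : f b < b) (ht : t ∈ Ioo a b)
    (htf : f t = t) (huniq : ∀ x ∈ Ioo a b, f x = x → x = t) (hx₀ : x₀ ∈ Icc a b)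
    (hx₀f : x₀ < f x₀) {x : ℝ} (hx : x ∈ Ioo a t) : x < f x := by
  have hbelow : ∀ y ∈ Ioc t b, f y < y := by
    intro y hy
    refine sub_pos.1 <| isPreconnected_Ioc.lt_apply_of_forall_ne
      (continuousOn_id.sub (hcont.mono (Ioc_subset_Icc_self.trans
        (Icc_subset_Icc_left ht.1.le)))) (fun z hz hz0 => ?_) (right_mem_Ioc.2 ht.2) hy
      (sub_pos.2 hb)
    rcases hz.2.lt_or_eq with hzb | rfl
    · exact hz.1.ne' (huniq z ⟨ht.1.trans hz.1, hzb⟩ (sub_eq_zero.1 hz0).symm)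
    · exact hb.ne (sub_eq_zero.1 hz0).symm
  have hx₀t : x₀ ∈ Ioo a t := by
    refine ⟨hx₀.1.lt_of_ne ?_, lt_of_not_ge fun htx₀ => ?_⟩
    · rintro rfl
      exact (ha.trans_lt hx₀f).false
    · rcases htx₀.eq_or_lt with rfl | htx₀
      · exact hx₀f.ne htf.symm
      · exact (hbelow x₀ ⟨htx₀, hx₀.2⟩).not_gt hx₀f
  refine sub_pos.1 <| isPreconnected_Ioo.lt_apply_of_forall_ne
    ((hcont.mono (Ioo_subset_Icc_self.trans (Icc_subset_Icc_right ht.2.le))).sub continuousOn_id)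
    (fun z hz hz0 => ?_) hx₀t hx (sub_pos.2 hx₀f)
  exact hz.2.ne (huniq z ⟨hz.1, hz.2.trans ht.2⟩ (sub_eq_zero.1 hz0))

theorem tendsto_nhdsGT_of_lt_apply {α : Type*} [TopologicalSpace α] [Preorder α] {f : α → α}
    {a : α} (hc : ContinuousWithinAt f (Ioi a) a) (ha : f a = a)
    (hgt : ∀ᶠ x in 𝓝[>] a, x < f x) : Tendsto f (𝓝[>] a) (𝓝[>] a) :=
  tendsto_nhdsWithin_iff.2 ⟨by simpa only [ha] using hc.tendsto,
    (hgt.and self_mem_nhdsWithin).mono fun _ hx => lt_trans hx.2 hx.1⟩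

theorem eventually_forall_iterate_mem_Ioo {α : Type*} [TopologicalSpace α] [LinearOrder α]
    [ClosedIciTopology α] {f : α → α} {a b : α} (hf : Tendsto f (𝓝[>] a) (𝓝[>] a))
    (hab : a < b) (n : ℕ) : ∀ᶠ y in 𝓝[>] a, ∀ j ≤ n, f^[j] y ∈ Ioo a b :=
  (eventually_all_finite (finite_Iic n)).2 fun j _ => hf.iterate j (Ioo_mem_nhdsGT hab)

theorem symmetric_map_pattern_allowed_general (f : ℝ → ℝ)
    (hcont : ContinuousOn f (Set.Icc (0 : ℝ) 1))
    (h0 : f 0 = 0)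
    (hsymm : ∀ x ∈ Set.Icc (0 : ℝ) 1, f x = f (1 - x))
    (hfix : ∃! t, t ∈ Set.Ioo (0 : ℝ) 1 ∧ f t = t)
    (habove : ∃ x₀ ∈ Set.Icc (0 : ℝ) 1, x₀ < f x₀)
    (m : ℕ) (hm : 3 ≤ m) :
    ∃ x ∈ Set.Icc (0 : ℝ) 1,
      (∀ i : ℕ, 1 ≤ i → i + 1 ≤ m - 1 → f^[i] x < f^[i + 1] x) ∧
      f^[m - 1] x < x := by
  obtain ⟨t, ⟨ht, htf⟩, huniq⟩ := hfix
  obtain ⟨x₀, hx₀, hx₀f⟩ := habove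
  have hf1 : f 1 = 0 := by simpa [h0] using (hsymm 0 (by norm_num)).symm
  have hgt : ∀ x ∈ Ioo 0 t, x < f x := fun x hx =>
    lt_apply_of_mem_Ioo_of_unique_fixedPt hcont h0.le (by norm_num [hf1]) ht htf
      (fun x hx hfx => huniq x ⟨hx, hfx⟩) hx₀ hx₀f hx
  have hright : Tendsto f (𝓝[>] 0) (𝓝[>] 0) :=
    tendsto_nhdsGT_of_lt_apply
      ((hcont 0 ⟨le_rfl, zero_le_one⟩).mono_of_mem_nhdsWithin (Icc_mem_nhdsGT one_pos)) h0
      (eventually_of_mem (Ioo_mem_nhdsGT ht.1) hgt)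
  obtain ⟨y, hy⟩ :=
    (eventually_forall_iterate_mem_Ioo hright (lt_min ht.1 one_half_pos) (m - 2)).exists
  have horbit_t : ∀ j ≤ m - 2, f^[j] y ∈ Ioo 0 t := fun j hj =>
    ⟨(hy j hj).1, (hy j hj).2.trans_le (min_le_left _ _)⟩
  have horbit_half : ∀ j ≤ m - 2, f^[j] y < 1 / 2 := fun j hj =>
    (hy j hj).2.trans_le (min_le_right _ _)
  have hy_t : y ∈ Ioo 0 t := horbit_t 0 (Nat.zero_le _)
  have hy_half : y < 1 / 2 := horbit_half 0 (Nat.zero_le _)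
  obtain ⟨z, ⟨hz0, hzy⟩, hfz⟩ : ∃ z ∈ Ioo 0 y, f z = y :=
    intermediate_value_Ioo hy_t.1.le (hcont.mono (Icc_subset_Icc_right (by linarith)))
      (by rw [h0]; exact ⟨hy_t.1, hgt y hy_t⟩)
  have hiter : ∀ j, f^[j + 1] (1 - z) = f^[j] y := fun j => by
    rw [Function.iterate_succ_apply, ← hsymm z ⟨hz0.le, by linarith⟩, hfz]
  refine ⟨1 - z, ⟨by linarith, by linarith⟩, fun i hi him => ?_, ?_⟩
  · obtain ⟨j, rfl⟩ := Nat.exists_eq_add_of_le' hi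
    rw [hiter, hiter, Function.iterate_succ_apply']
    exact hgt _ (horbit_t j (by omega))
  · rw [show m - 1 = m - 2 + 1 by omega, hiter]
    linarith [horbit_half (m - 2) le_rfl]

/-- Let `f : [0,1] → [0,1]` be continuous with `f(0) = 0`, `f(x) = f(1-x)` for all `x`,
exactly one fixed point in `(0,1)`, and `f(x₀) > x₀` for some `x₀`. Then for every
`m ≥ 3` there exists `x ∈ [0,1]` with `f(x) < f²(x) < ⋯ < f^{m-1}(x) < x`:
the pattern `m·1·2·⋯·(m-1)` is allowed for `f`. -/
theorem symmetric_map_pattern_allowed (f : ℝ → ℝ)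
    (hmap : ∀ x ∈ Set.Icc (0 : ℝ) 1, f x ∈ Set.Icc (0 : ℝ) 1)
    (hcont : ContinuousOn f (Set.Icc (0 : ℝ) 1))
    (h0 : f 0 = 0)
    (hsymm : ∀ x ∈ Set.Icc (0 : ℝ) 1, f x = f (1 - x))
    (hfix : ∃! t, t ∈ Set.Ioo (0 : ℝ) 1 ∧ f t = t)
    (habove : ∃ x₀ ∈ Set.Icc (0 : ℝ) 1, x₀ < f x₀)
    (m : ℕ) (hm : 3 ≤ m) :
    ∃ x ∈ Set.Icc (0 : ℝ) 1,
      (∀ i : ℕ, 1 ≤ i → i + 1 ≤ m - 1 → f^[i] x < f^[i + 1] x) ∧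
      f^[m - 1] x < x :=
  symmetric_map_pattern_allowed_general f hcont h0 hsymm hfix habove m hm
end

section
/- Let g : [0,1] → [0,1] be g(x) = 1 − x². Let φ = (√5 − 1)/2 be the fixed point of g in (0,1). Then for every x ∈ (0, φ) and every k ≥ 0: g^{2k+2}(x) < g^{2k}(x) and g^{2k}(x) < g^{2k+1}(x) < g^{2k+3}(x); in particular the even iterates of x are strictly decreasing, the odd iterates strictly increasing, and every even iterate is less than every odd iterate. -/
def gmap : ℝ → ℝ := fun x => 1 - x ^ 2

/-!
On `[0, 1]` the map `g` is strictly decreasing and swaps `(0, φ)` with `(φ, 1)`, so `g²` maps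
`(0, φ)` into itself. There `g²(y) < y`, by the identity `g²(y) - y = -y (1 - y) (g(y) - y)`,
and applying the decreasing map `g` once more gives `g(y) < g³(y)`. Taking `y = g^{2k}(x)`
yields all three inequalities.
-/

open Set Function

local notation "φ" => (Real.sqrt 5 - 1) / 2

lemma gmap_strictAntiOn : StrictAntiOn gmap (Ici 0) := fun a ha b _ hab => by
  simp only [gmap]
  nlinarith [mem_Ici.mp ha]

lemma gmap_zero : gmap 0 = 1 := by norm_num [gmap]

lemma gmap_one : gmap 1 = 0 := by norm_num [gmap]

lemma gmap_fixedPoint : gmap φ = φ := by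
  have h5 : Real.sqrt 5 ^ 2 = 5 := Real.sq_sqrt (by norm_num)
  simp only [gmap]
  linear_combination -h5 / 4

lemma fixedPoint_pos : 0 < φ := by
  have : (1 : ℝ) < Real.sqrt 5 := by
    rw [Real.lt_sqrt zero_le_one]; norm_num
  linarith

lemma fixedPoint_lt_one : φ < 1 := by
  have : Real.sqrt 5 < 3 := by
    rw [Real.sqrt_lt' three_pos]; norm_num
  linarith

lemma mapsTo_gmap_Ioo_zero_fixedPoint : MapsTo gmap (Ioo 0 φ) (Ioo φ 1) := by
  simpa only [gmap_zero, gmap_fixedPoint] using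
    (gmap_strictAntiOn.mono (Icc_subset_Ici_self : Icc 0 φ ⊆ Ici 0)).mapsTo_Ioo

lemma mapsTo_gmap_Ioo_fixedPoint_one : MapsTo gmap (Ioo φ 1) (Ioo 0 φ) := by
  simpa only [gmap_one, gmap_fixedPoint] using
    (gmap_strictAntiOn.mono (Icc_subset_Ici_iff fixedPoint_lt_one.le |>.mpr
      fixedPoint_pos.le)).mapsTo_Ioo

lemma gmap_gmap_sub_self (y : ℝ) : gmap (gmap y) - y = -(y * (1 - y) * (gmap y - y)) := by
  simp only [gmap]
  ring

lemma gmap_gmap_lt_self {y : ℝ} (hy : y ∈ Ioo 0 1) (h : y < gmap y) : gmap (gmap y) < y := by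
  have : 0 < y * (1 - y) * (gmap y - y) :=
    mul_pos (mul_pos hy.1 (sub_pos.mpr hy.2)) (sub_pos.mpr h)
  linarith [gmap_gmap_sub_self y]

/-- Let `g(x) = 1 - x²` and `φ = (√5 - 1)/2` be the fixed point of `g` in `(0,1)`.
For every `x ∈ (0, φ)` and `k ≥ 0`: `g^{2k+2}(x) < g^{2k}(x)` and
`g^{2k}(x) < g^{2k+1}(x) < g^{2k+3}(x)`: even iterates strictly decrease, odd iterates
strictly increase, and every even iterate is less than every odd one. -/
theorem gmap_iterates (x : ℝ) (hx : x ∈ Set.Ioo (0 : ℝ) ((Real.sqrt 5 - 1) / 2))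
    (k : ℕ) :
    gmap^[2 * k + 2] x < gmap^[2 * k] x ∧
    gmap^[2 * k] x < gmap^[2 * k + 1] x ∧
    gmap^[2 * k + 1] x < gmap^[2 * k + 3] x := by
  have hmaps : MapsTo gmap^[2] (Ioo 0 φ) (Ioo 0 φ) :=
    mapsTo_gmap_Ioo_fixedPoint_one.comp mapsTo_gmap_Ioo_zero_fixedPoint
  set y := gmap^[2 * k] x
  have hy : y ∈ Ioo 0 φ := by
    simpa only [y, iterate_mul] using hmaps.iterate k hx
  have hgy := mapsTo_gmap_Ioo_zero_fixedPoint hy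
  have hggy : gmap (gmap y) < y :=
    gmap_gmap_lt_self ⟨hy.1, hy.2.trans fixedPoint_lt_one⟩ (hy.2.trans hgy.1)
  simp only [add_comm (2 * k), iterate_add_apply]
  exact ⟨hggy, hy.2.trans hgy.1, gmap_strictAntiOn (hmaps hy).1.le hy.1.le hggy⟩
end

section
/- Let f : [0,1] → [0,1] and let D = { x ∈ [0,1] : f(x) < x }. Suppose D is a union of k intervals (connected components) D₁, …, D_k, and suppose there is y ∈ [0,1] whose first n = 2k+2 iterates y, f(y), …, f^{n−1}(y) realize the pattern 3·5·⋯·(2k+1)·(2k+2)·(2k)·(2k−2)·⋯·4·2·1 (i.e., for some indexing, k+1 consecutive positions j, j+1, …, j+k each satisfy f^{j−1}(y) > f^j(y) with an intermediate point f^{ℓ−1}(y) strictly between consecutive descent values and satisfying f^{ℓ−1}(y) < f^ℓ(y)). Then a contradiction follows: two of the k+1 descent points lie in the same component D_α, and the intermediate point lies in D_α yet not in D. Hence this pattern of length 2k+2 is forbidden for f. -/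
/-!
The descents of the pattern occupy the `k + 1` consecutive positions `k, …, 2k`, so the
corresponding orbit points lie in `D`, and by pigeonhole two of them, at positions
`k + i₁ < k + i₂`, lie in the same interval component. The ascent point at position `k - i₂`
lies strictly between them, hence in that component and so in `D`, which contradicts
`f^[k - i₂] y < f^[k - i₂ + 1] y`.
-/

/-- The rank (1-based) of the `j`-th orbit point (0-indexed) in the pattern
`3·5·⋯·(2k+1)·(2k+2)·(2k)·(2k-2)·⋯·4·2·1` of length `2k+2`. -/
def descentPattern (k j : ℕ) : ℕ :=
  if j < k then 2 * j + 3
  else if j = k then 2 * k + 2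
  else if j < 2 * k + 1 then 4 * k + 2 - 2 * j
  else 1

open Function Set

theorem exists_lt_uIcc_subset_iUnion_of_card_lt {α ι κ : Type*} [LinearOrder α] [Fintype ι]
    [Fintype κ] [LinearOrder κ] (D : ι → Set α) (hconn : ∀ a, (D a).OrdConnected)
    (p : κ → α) (hp : ∀ j, p j ∈ ⋃ a, D a) (hcard : Fintype.card ι < Fintype.card κ) :
    ∃ j₁ j₂, j₁ < j₂ ∧ uIcc (p j₁) (p j₂) ⊆ ⋃ a, D a := by
  choose g hg using fun j => mem_iUnion.mp (hp j)
  obtain ⟨j₁, j₂, hne, hg₁₂⟩ := Fintype.exists_ne_map_eq_of_card_lt g hcard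
  have hsub : uIcc (p j₁) (p j₂) ⊆ ⋃ a, D a :=
    ((hconn (g j₁)).uIcc_subset (hg j₁) (hg₁₂ ▸ hg j₂)).trans (subset_iUnion D _)
  rcases hne.lt_or_gt with h | h
  · exact ⟨j₁, j₂, h, hsub⟩
  · exact ⟨j₂, j₁, h, uIcc_comm (p j₁) (p j₂) ▸ hsub⟩

theorem descentPattern_succ_lt {k j : ℕ} (hkj : k ≤ j) (hj : j ≤ 2 * k) :
    descentPattern k (j + 1) < descentPattern k j := by
  unfold descentPattern
  split_ifs <;> omega

theorem descentPattern_lt_succ {k j : ℕ} (hj : j < k) :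
    descentPattern k j < descentPattern k (j + 1) := by
  unfold descentPattern
  split_ifs <;> omega

theorem descentPattern_sub_mem_Ioo {k i₁ i₂ : ℕ} (h₁₂ : i₁ < i₂) (hi₂ : i₂ ≤ k) :
    descentPattern k (k - i₂) ∈ Ioo (descentPattern k (k + i₂)) (descentPattern k (k + i₁)) := by
  unfold descentPattern
  constructor <;> split_ifs <;> omega

theorem descent_pattern_forbidden_general (k : ℕ) (f : ℝ → ℝ)
    (hmap : ∀ x ∈ Set.Icc (0 : ℝ) 1, f x ∈ Set.Icc (0 : ℝ) 1)
    (D : Fin k → Set ℝ)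
    (hconn : ∀ α : Fin k, (D α).OrdConnected)
    (hD : {x : ℝ | x ∈ Set.Icc (0 : ℝ) 1 ∧ f x < x} = ⋃ α : Fin k, D α) :
    ¬ ∃ y ∈ Set.Icc (0 : ℝ) 1,
      ∀ i j : ℕ, i < 2 * k + 2 → j < 2 * k + 2 →
        (descentPattern k i < descentPattern k j ↔ f^[i] y < f^[j] y) := by
  rintro ⟨y, hy, hpat⟩
  have horbit (j : ℕ) : f^[j] y ∈ Icc 0 1 := MapsTo.iterate (fun x hx => hmap x hx) j hy
  have hdesc (i : Fin (k + 1)) : f^[k + i] y ∈ ⋃ α, D α := by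
    have hlt := (hpat _ _ (by omega) (by omega)).mp (descentPattern_succ_lt (j := k + i)
      (by omega) (by omega))
    rw [iterate_succ_apply'] at hlt
    exact hD ▸ ⟨horbit _, hlt⟩
  obtain ⟨i₁, i₂, h₁₂, hsub⟩ := exists_lt_uIcc_subset_iUnion_of_card_lt D hconn
    (fun i : Fin (k + 1) => f^[k + i] y) hdesc (by simp)
  have hbetween := descentPattern_sub_mem_Ioo h₁₂ (Nat.lt_succ_iff.mp i₂.isLt)
  have hmem : f^[k - i₂] y ∈ {x | x ∈ Icc 0 1 ∧ f x < x} := hD ▸ hsub (Icc_subset_uIcc'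
    ⟨((hpat _ _ (by omega) (by omega)).mp hbetween.1).le,
      ((hpat _ _ (by omega) (by omega)).mp hbetween.2).le⟩)
  have hasc := (hpat _ _ (by omega) (by omega)).mp
    (descentPattern_lt_succ (j := k - i₂) (by omega))
  rw [iterate_succ_apply'] at hasc
  exact lt_asymm hmem.2 hasc

/-- Let `f : [0,1] → [0,1]` and `D = {x ∈ [0,1] : f(x) < x}`. If `D` is a union of `k`
intervals, then the pattern `3·5·⋯·(2k+1)·(2k+2)·(2k)·(2k-2)·⋯·4·2·1` of length
`2k+2` is forbidden for `f`: no `y ∈ [0,1]` has its first `2k+2` iterates realizing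
this relative order. -/
theorem descent_pattern_forbidden (k : ℕ) (hk : 1 ≤ k) (f : ℝ → ℝ)
    (hmap : ∀ x ∈ Set.Icc (0 : ℝ) 1, f x ∈ Set.Icc (0 : ℝ) 1)
    (D : Fin k → Set ℝ)
    (hconn : ∀ α : Fin k, (D α).OrdConnected)
    (hD : {x : ℝ | x ∈ Set.Icc (0 : ℝ) 1 ∧ f x < x} = ⋃ α : Fin k, D α) :
    ¬ ∃ y ∈ Set.Icc (0 : ℝ) 1,
      ∀ i j : ℕ, i < 2 * k + 2 → j < 2 * k + 2 →
        (descentPattern k i < descentPattern k j ↔ f^[i] y < f^[j] y) :=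
  descent_pattern_forbidden_general k f hmap D hconn hD
end
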